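/- For every 0 < p ≤ 1 and every C > 0 there exists a constant K = K(C, p) > 0 such that: whenever X is a p-Banach space over 𝔽 = ℂ and 𝒳 is a basis of X that is C-URGPCC, the basis 𝒳 is K-unconditional. -/

import Mathlib

/-!
By the `p`-triangle inequality it suffices to bound `‖f - P_A f‖` by a multiple of `‖f‖`.
If the coefficients of `f` on `A` have nonnegative real part and `f` has a vanishing coefficient
at some `d`, adding `β 𝟙_{A ∪ {d}}` with `β ≥ sup_n |x_n^*(f)|` makes `A ∪ {d}` a greedy set whose
minimal coefficient is exactly `β`, and URGPCC yields `‖f - P_A f‖ ≤ C ‖f‖`. Since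
`x_n^*(f) → 0`, deleting the `d`-th term of `f` for large `d` costs arbitrarily little, so the
vanishing coefficient is not needed. A general `A` splits into the indices where the real part is
negative and the rest; treating the first part via `-f` and then the second gives
`‖f - P_A f‖ ≤ C² ‖f‖`.
-/

open scoped BigOperators

noncomputable section

/-- A basis of a `p`-Banach space over `𝕜` (`𝕜 = ℝ` or `ℂ`), bundled with the `p`-norm
`N`, the basis vectors `e`, and the biorthogonal functionals `coord`. -/
structure PBasis (𝕜 : Type*) [RCLike 𝕜] (X : Type*) [AddCommGroup X] [Module 𝕜 X]
    (p : ℝ) : Type _ where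
  /-- the `p`-norm of the space -/
  N : X → ℝ
  N_nonneg : ∀ f : X, 0 ≤ N f
  N_eq_zero_iff : ∀ f : X, N f = 0 ↔ f = 0
  N_smul : ∀ (t : 𝕜) (f : X), N (t • f) = ‖t‖ * N f
  N_padd : ∀ f g : X, N (f + g) ^ p ≤ N f ^ p + N g ^ p
  /-- completeness with respect to the `p`-norm -/
  complete : ∀ u : ℕ → X,
      (∀ ε : ℝ, 0 < ε → ∃ n₀ : ℕ, ∀ m n : ℕ, n₀ ≤ m → n₀ ≤ n → N (u m - u n) < ε) →
      ∃ f : X, ∀ ε : ℝ, 0 < ε → ∃ n₀ : ℕ, ∀ n : ℕ, n₀ ≤ n → N (u n - f) < ε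
  /-- the basis vectors -/
  e : ℕ → X
  /-- the biorthogonal functionals -/
  coord : ℕ → X →ₗ[𝕜] 𝕜
  biorth : ∀ n m : ℕ, coord n (e m) = if n = m then (1 : 𝕜) else 0
  /-- the closed linear span of the basis vectors is the whole space -/
  dense_span : ∀ f : X, ∀ ε : ℝ, 0 < ε →
      ∃ g ∈ Submodule.span 𝕜 (Set.range e), N (f - g) < ε
  e_bdd : ∃ c : ℝ, ∀ n : ℕ, N (e n) ≤ c
  coord_bdd : ∃ c : ℝ, ∀ (n : ℕ) (f : X), ‖coord n f‖ ≤ c * N f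

namespace PBasis

variable {𝕜 : Type*} [RCLike 𝕜] {X : Type*} [AddCommGroup X] [Module 𝕜 X] {p : ℝ}

/-- The projection `P_A f = ∑_{n ∈ A} x_n^*(f) x_n`. -/
def proj (bs : PBasis 𝕜 X p) (A : Finset ℕ) (f : X) : X :=
  ∑ n ∈ A, bs.coord n f • bs.e n

/-- The support of `f`. -/
def supp (bs : PBasis 𝕜 X p) (f : X) : Set ℕ := {n | bs.coord n f ≠ 0}

/-- `A` is a greedy set of `f`: `min_{n ∈ A} |x_n^*(f)| ≥ max_{m ∉ A} |x_m^*(f)|`. -/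
def IsGreedySet (bs : PBasis 𝕜 X p) (f : X) (A : Finset ℕ) : Prop :=
  ∀ n ∈ A, ∀ m : ℕ, m ∉ A → ‖bs.coord m f‖ ≤ ‖bs.coord n f‖

/-- `𝟙_{ε,A} = ∑_{j ∈ A} ε_j x_j`. -/
def indSign (bs : PBasis 𝕜 X p) (ε : ℕ → 𝕜) (A : Finset ℕ) : X :=
  ∑ j ∈ A, ε j • bs.e j

/-- `𝟙_A = ∑_{j ∈ A} x_j`. -/
def ind (bs : PBasis 𝕜 X p) (A : Finset ℕ) : X := ∑ j ∈ A, bs.e j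

/-- `ε` is a sign on `A`. -/
def IsSign (ε : ℕ → 𝕜) (A : Finset ℕ) : Prop := ∀ j ∈ A, ‖ε j‖ = 1

/-- `min_{n ∈ A} |x_n^*(f)|`. -/
def minCoef (bs : PBasis 𝕜 X p) (f : X) (A : Finset ℕ) : ℝ :=
  sInf ((fun n => ‖bs.coord n f‖) '' (A : Set ℕ))

/-- `‖f − P_A(f)‖ ≤ C·σ_m(f)` for every greedy set `A` of cardinality `m`. -/
def IsGreedyWith (bs : PBasis 𝕜 X p) (C : ℝ) : Prop :=
  ∀ (f : X) (A B : Finset ℕ) (a : ℕ → 𝕜), bs.IsGreedySet f A → B.card ≤ A.card →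
    bs.N (f - bs.proj A f) ≤ C * bs.N (f - ∑ j ∈ B, a j • bs.e j)

/-- `‖f − P_A(f)‖ ≤ C·ρ_m(f)` for every greedy set `A` of cardinality `m`, where
`ρ_m(f) = inf {‖f − α 𝟙_{ε,B}‖ : |B| = m, ε sign}` and `α = min_{n ∈ A} |x_n^*(f)|`. -/
def IsRGPCCWith (bs : PBasis 𝕜 X p) (C : ℝ) : Prop :=
  ∀ (f : X) (A B : Finset ℕ) (ε : ℕ → 𝕜), bs.IsGreedySet f A → B.card = A.card →
    IsSign ε B →
    bs.N (f - bs.proj A f) ≤ C * bs.N (f - ((bs.minCoef f A : ℝ) : 𝕜) • bs.indSign ε B)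

/-- `‖f − P_A(f)‖ ≤ C·ϱ_m(f)` for every greedy set `A` of cardinality `m`, where
`ϱ_m(f) = inf {‖f − α 𝟙_B‖ : |B| = m}` and `α = min_{n ∈ A} |x_n^*(f)|`. -/
def IsURGPCCWith (bs : PBasis 𝕜 X p) (C : ℝ) : Prop :=
  ∀ (f : X) (A B : Finset ℕ), bs.IsGreedySet f A → B.card = A.card →
    bs.N (f - bs.proj A f) ≤ C * bs.N (f - ((bs.minCoef f A : ℝ) : 𝕜) • bs.ind B)

/-- `K`-unconditionality. -/
def IsUncondWith (bs : PBasis 𝕜 X p) (K : ℝ) : Prop :=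
  ∀ (A : Finset ℕ) (f : X), bs.N (bs.proj A f) ≤ K * bs.N f

/-- `C`-quasi-greediness. -/
def IsQuasiGreedyWith (bs : PBasis 𝕜 X p) (C : ℝ) : Prop :=
  ∀ (f : X) (A : Finset ℕ), bs.IsGreedySet f A → bs.N (f - bs.proj A f) ≤ C * bs.N f

/-- `C`-almost-greediness. -/
def IsAlmostGreedyWith (bs : PBasis 𝕜 X p) (C : ℝ) : Prop :=
  ∀ (f : X) (A B : Finset ℕ), bs.IsGreedySet f A → B.card ≤ A.card →
    bs.N (f - bs.proj A f) ≤ C * bs.N (f - bs.proj B f)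

/-- `D`-democracy. -/
def IsDemocraticWith (bs : PBasis 𝕜 X p) (D : ℝ) : Prop :=
  ∀ A B : Finset ℕ, A.card ≤ B.card → bs.N (bs.ind A) ≤ D * bs.N (bs.ind B)

/-- `D`-superdemocracy. -/
def IsSuperdemocraticWith (bs : PBasis 𝕜 X p) (D : ℝ) : Prop :=
  ∀ (A B : Finset ℕ) (ε η : ℕ → 𝕜), A.card ≤ B.card → IsSign ε A → IsSign η B →
    bs.N (bs.indSign ε A) ≤ D * bs.N (bs.indSign η B)

/-- `A < B`, i.e. every element of `A` is smaller than every element of `B`. -/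
def FinsetBefore (A B : Finset ℕ) : Prop := ∀ a ∈ A, ∀ b ∈ B, a < b

open scoped Classical in
/-- `sgn z = z/|z|` (with the convention `sgn 0 = 1`). -/
def sgn (z : 𝕜) : 𝕜 := if z = 0 then 1 else z / ((‖z‖ : ℝ) : 𝕜)

end PBasis

open Filter Topology RCLike

theorem le_rpow_inv_mul_of_rpow_le_mul_rpow {x y a p : ℝ} (hp : 0 < p) (hx : 0 ≤ x)
    (hy : 0 ≤ y) (ha : 0 ≤ a) (h : x ^ p ≤ a * y ^ p) : x ≤ a ^ p⁻¹ * y := by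
  rwa [← Real.rpow_le_rpow_iff hx (by positivity) hp, Real.mul_rpow (by positivity) hy,
    Real.rpow_inv_rpow ha hp.ne']

theorem le_norm_add_ofReal {𝕜 : Type*} [RCLike 𝕜] {z : 𝕜} (hz : 0 ≤ re z) (β : ℝ) :
    β ≤ ‖z + β‖ :=
  calc β ≤ re (z + β) := by simp only [map_add, ofReal_re]; linarith
    _ ≤ ‖z + β‖ := re_le_norm _

namespace PBasis

variable {𝕜 : Type*} [RCLike 𝕜] {X : Type*} [AddCommGroup X] [Module 𝕜 X] {p : ℝ}
  (bs : PBasis 𝕜 X p)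

theorem N_neg (x : X) : bs.N (-x) = bs.N x := by
  simpa using bs.N_smul (-1) x

theorem N_sub_rpow_le (x y : X) : bs.N (x - y) ^ p ≤ bs.N x ^ p + bs.N y ^ p := by
  simpa only [sub_eq_add_neg, N_neg] using bs.N_padd x (-y)

theorem coord_ind (E : Finset ℕ) (m : ℕ) :
    bs.coord m (bs.ind E) = if m ∈ E then 1 else 0 := by
  simp [ind, bs.biorth]

theorem coord_proj (A : Finset ℕ) (f : X) (m : ℕ) :
    bs.coord m (bs.proj A f) = if m ∈ A then bs.coord m f else 0 := by
  simp [proj, bs.biorth]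

theorem proj_congr {A : Finset ℕ} {f g : X} (h : ∀ n ∈ A, bs.coord n f = bs.coord n g) :
    bs.proj A f = bs.proj A g :=
  Finset.sum_congr rfl fun n hn => by rw [h n hn]

theorem proj_neg (A : Finset ℕ) (f : X) : bs.proj A (-f) = -bs.proj A f := by
  simp [proj]

theorem proj_add_smul_ind (E : Finset ℕ) (f : X) (t : 𝕜) :
    bs.proj E (f + t • bs.ind E) = bs.proj E f + t • bs.ind E := by
  have h : ∀ n ∈ E, bs.coord n (f + t • bs.ind E) • bs.e n = bs.coord n f • bs.e n + t • bs.e n :=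
    fun n hn => by rw [map_add, map_smul, coord_ind, if_pos hn, smul_eq_mul, mul_one, add_smul]
  rw [proj, Finset.sum_congr rfl h, Finset.sum_add_distrib, ind, Finset.smul_sum, proj]

theorem proj_insert_of_coord_eq_zero (A : Finset ℕ) {f : X} {d : ℕ} (hd : bs.coord d f = 0) :
    bs.proj (insert d A) f = bs.proj A f :=
  Finset.sum_insert_zero (by rw [hd, zero_smul])

theorem proj_filter_add_proj_filter_not (A : Finset ℕ) (f : X) (q : ℕ → Prop)
    [DecidablePred q] :
    bs.proj (A.filter q) f + bs.proj (A.filter fun n => ¬ q n) f = bs.proj A f :=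
  Finset.sum_filter_add_sum_filter_not A q _

theorem minCoef_eq_of_mem {f : X} {E : Finset ℕ} {d : ℕ} {a : ℝ} (hd : d ∈ E)
    (hda : ‖bs.coord d f‖ = a) (h : ∀ n ∈ E, a ≤ ‖bs.coord n f‖) : bs.minCoef f E = a :=
  IsLeast.csInf_eq ⟨⟨d, hd, hda⟩, by rintro _ ⟨n, hn, rfl⟩; exact h n hn⟩

theorem tendsto_coord_atTop (f : X) : Tendsto (fun n => bs.coord n f) atTop (𝓝 0) := by
  obtain ⟨c, hc⟩ := bs.coord_bdd
  refine Metric.tendsto_atTop.mpr fun ε hε => ?_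
  obtain ⟨g, hg, hfg⟩ := bs.dense_span f (ε / (|c| + 1)) (by positivity)
  obtain ⟨w, rfl⟩ := Finsupp.mem_span_range_iff_exists_finsupp.mp hg
  obtain ⟨N, hN⟩ := w.support.exists_nat_subset_range
  refine ⟨N, fun n hn => ?_⟩
  have hgn : bs.coord n (w.sum fun i a => a • bs.e i) = 0 := by
    rw [map_finsuppSum]
    refine Finset.sum_eq_zero fun i hi => ?_
    have hin : n ≠ i := by
      rintro rfl
      exact absurd (Finset.mem_range.mp (hN hi)) (not_lt.mpr hn)
    show bs.coord n (w i • bs.e i) = 0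
    rw [map_smul, bs.biorth, if_neg hin, smul_zero]
  rw [dist_zero_right, ← sub_zero (bs.coord n f), ← hgn, ← map_sub]
  have hN0 := bs.N_nonneg (f - w.sum fun i a => a • bs.e i)
  calc ‖bs.coord n _‖ ≤ c * bs.N _ := hc n _
    _ ≤ (|c| + 1) * bs.N _ := by gcongr; linarith [le_abs_self c]
    _ < (|c| + 1) * (ε / (|c| + 1)) := by gcongr
    _ = ε := mul_div_cancel₀ ε (by positivity)

theorem tendsto_N_coord_smul_e_atTop (f : X) :
    Tendsto (fun n => bs.N (bs.coord n f • bs.e n)) atTop (𝓝 0) := by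
  obtain ⟨c, hc⟩ := bs.e_bdd
  have hlim : Tendsto (fun n => ‖bs.coord n f‖ * c) atTop (𝓝 0) := by
    simpa using (bs.tendsto_coord_atTop f).norm.mul_const c
  refine squeeze_zero (fun n => bs.N_nonneg _) (fun n => ?_) hlim
  rw [bs.N_smul]
  exact mul_le_mul_of_nonneg_left (hc n) (norm_nonneg _)

theorem isUncondWith_of_N_sub_proj_le (hp : 0 < p) {M : ℝ} (hM : 0 ≤ M)
    (h : ∀ (A : Finset ℕ) (f : X), bs.N (f - bs.proj A f) ≤ M * bs.N f) :
    bs.IsUncondWith ((1 + M ^ p) ^ p⁻¹) := by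
  intro A f
  refine le_rpow_inv_mul_of_rpow_le_mul_rpow hp (bs.N_nonneg _) (bs.N_nonneg f)
    (by positivity) ?_
  calc bs.N (bs.proj A f) ^ p = bs.N (f - (f - bs.proj A f)) ^ p := by rw [sub_sub_cancel]
    _ ≤ bs.N f ^ p + bs.N (f - bs.proj A f) ^ p := bs.N_sub_rpow_le _ _
    _ ≤ bs.N f ^ p + (M * bs.N f) ^ p := by gcongr; exacts [bs.N_nonneg _, h A f]
    _ = (1 + M ^ p) * bs.N f ^ p := by rw [Real.mul_rpow hM (bs.N_nonneg f)]; ring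

section URGPCC

variable {bs}

theorem IsURGPCCWith.N_sub_proj_le_of_coord_eq_zero {C : ℝ} (hU : bs.IsURGPCCWith C)
    {f : X} {A : Finset ℕ} (hA : ∀ n ∈ A, 0 ≤ re (bs.coord n f)) {d : ℕ}
    (hd : bs.coord d f = 0) : bs.N (f - bs.proj A f) ≤ C * bs.N f := by
  obtain ⟨c, hc⟩ := bs.coord_bdd
  set β := c * bs.N f
  have hβ : 0 ≤ β := (norm_nonneg _).trans (hc 0 f)
  set E := insert d A
  have hE : ∀ n ∈ E, 0 ≤ re (bs.coord n f) :=
    Finset.forall_mem_insert _ _ _ |>.mpr ⟨by simp [hd], hA⟩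
  set g := f + (β : 𝕜) • bs.ind E with hg
  have hcoord : ∀ m, bs.coord m g = bs.coord m f + if m ∈ E then (β : 𝕜) else 0 := by
    simp [g, coord_ind]
  have hgreedy : bs.IsGreedySet g E := by
    intro n hn m hm
    rw [hcoord, hcoord, if_pos hn, if_neg hm, add_zero]
    exact (hc m f).trans (le_norm_add_ofReal (hE n hn) β)
  have hmin : bs.minCoef g E = β :=
    bs.minCoef_eq_of_mem (Finset.mem_insert_self d A)
      (by simp [hcoord, hd, E, abs_of_nonneg hβ])
      fun n hn => by rw [hcoord, if_pos hn]; exact le_norm_add_ofReal (hE n hn) β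
  have key := hU g E E hgreedy rfl
  rwa [hmin, hg, proj_add_smul_ind, add_sub_add_right_eq_sub, add_sub_cancel_right,
    proj_insert_of_coord_eq_zero _ _ hd] at key

theorem IsURGPCCWith.N_sub_proj_le_of_re_nonneg {C : ℝ} (hU : bs.IsURGPCCWith C)
    (hp : 0 < p) (hC : 0 ≤ C) {f : X} {A : Finset ℕ} (hA : ∀ n ∈ A, 0 ≤ re (bs.coord n f)) :
    bs.N (f - bs.proj A f) ≤ C * bs.N f := by
  set t := fun n => bs.N (bs.coord n f • bs.e n) ^ p
  have ht : Tendsto t atTop (𝓝 0) := by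
    simpa [Real.zero_rpow hp.ne'] using
      (bs.tendsto_N_coord_smul_e_atTop f).rpow_const (Or.inr hp.le)
  have hbound : ∀ᶠ d in atTop, bs.N (f - bs.proj A f) ^ p ≤ C ^ p * (bs.N f ^ p + t d) + t d := by
    filter_upwards [Nat.cofinite_eq_atTop ▸ A.eventually_cofinite_notMem] with d hdA
    set f' := f - bs.coord d f • bs.e d
    have hcoord : ∀ n, bs.coord n f' = if n = d then 0 else bs.coord n f := by
      intro n
      by_cases hnd : n = d <;> simp [f', bs.biorth, hnd]
    have hA' : ∀ n ∈ A, bs.coord n f' = bs.coord n f := fun n hn => by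
      rw [hcoord, if_neg (ne_of_mem_of_not_mem hn hdA)]
    have hf' : f - bs.proj A f = (f' - bs.proj A f') + bs.coord d f • bs.e d := by
      rw [bs.proj_congr hA', sub_add_eq_add_sub, sub_add_cancel]
    have hmain := hU.N_sub_proj_le_of_coord_eq_zero (fun n hn => hA' n hn ▸ hA n hn)
      (by simp [hcoord] : bs.coord d f' = 0)
    calc bs.N (f - bs.proj A f) ^ p ≤ bs.N (f' - bs.proj A f') ^ p + t d :=
          hf' ▸ bs.N_padd _ _
      _ ≤ (C * bs.N f') ^ p + t d := by gcongr; exact bs.N_nonneg _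
      _ = C ^ p * bs.N f' ^ p + t d := by rw [Real.mul_rpow hC (bs.N_nonneg _)]
      _ ≤ C ^ p * (bs.N f ^ p + t d) + t d := by gcongr; exact bs.N_sub_rpow_le _ _
  have hlim : Tendsto (fun d => C ^ p * (bs.N f ^ p + t d) + t d) atTop
      (𝓝 (C ^ p * bs.N f ^ p)) := by
    simpa using ((ht.const_add (bs.N f ^ p)).const_mul (C ^ p)).add ht
  have h := le_rpow_inv_mul_of_rpow_le_mul_rpow hp (bs.N_nonneg _) (bs.N_nonneg f)
    (by positivity) (ge_of_tendsto hlim hbound)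
  rwa [Real.rpow_rpow_inv hC hp.ne'] at h

theorem IsURGPCCWith.N_sub_proj_le {C : ℝ} (hU : bs.IsURGPCCWith C) (hp : 0 < p)
    (hC : 0 ≤ C) (A : Finset ℕ) (f : X) : bs.N (f - bs.proj A f) ≤ C * C * bs.N f := by
  classical
  set A₁ := A.filter fun n => re (bs.coord n f) < 0
  set A₂ := A.filter fun n => ¬ re (bs.coord n f) < 0
  set f₁ := f - bs.proj A₁ f
  have h₁ : bs.N f₁ ≤ C * bs.N f := by
    have h := hU.N_sub_proj_le_of_re_nonneg hp hC (f := -f) (A := A₁) fun n hn => by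
      simp only [A₁, Finset.mem_filter] at hn
      simp only [map_neg]
      linarith [hn.2]
    rwa [proj_neg, sub_neg_eq_add, neg_add_eq_sub, ← neg_sub, N_neg, N_neg] at h
  have hA₂ : ∀ n ∈ A₂, bs.coord n f₁ = bs.coord n f := fun n hn => by
    have hn₁ : n ∉ A₁ := fun h => (Finset.mem_filter.mp hn).2 (Finset.mem_filter.mp h).2
    rw [map_sub, coord_proj, if_neg hn₁, sub_zero]
  have h₂ := hU.N_sub_proj_le_of_re_nonneg hp hC (f := f₁) (A := A₂) fun n hn => by
    rw [hA₂ n hn]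
    exact not_lt.mp (Finset.mem_filter.mp hn).2
  rw [bs.proj_congr hA₂, sub_sub, bs.proj_filter_add_proj_filter_not] at h₂
  exact (h₂.trans (mul_le_mul_of_nonneg_left h₁ hC)).trans_eq (mul_assoc C C _).symm

end URGPCC

end PBasis

theorem URGPCC_implies_unconditional_complex_general (p C : ℝ) (hp : 0 < p)
    (hC : 0 < C) :
    ∃ K : ℝ, 0 < K ∧
      ∀ (X : Type*) [AddCommGroup X] [Module ℂ X] (bs : PBasis ℂ X p),
        bs.IsURGPCCWith C → bs.IsUncondWith K :=
  ⟨(1 + (C * C) ^ p) ^ p⁻¹, by positivity, fun _ _ _ bs hU =>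
    bs.isUncondWith_of_N_sub_proj_le hp (by positivity) (hU.N_sub_proj_le hp hC.le)⟩

/-- For every `0 < p ≤ 1` and `C > 0` there is `K = K(C,p) > 0` such that every
`C`-URGPCC basis of a `p`-Banach space over `ℂ` is `K`-unconditional. -/
theorem URGPCC_implies_unconditional_complex (p C : ℝ) (hp : 0 < p) (hp1 : p ≤ 1)
    (hC : 0 < C) :
    ∃ K : ℝ, 0 < K ∧
      ∀ (X : Type*) [AddCommGroup X] [Module ℂ X] (bs : PBasis ℂ X p),
        bs.IsURGPCCWith C → bs.IsUncondWith K :=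
  URGPCC_implies_unconditional_complex_general p C hp hC
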